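/- arXiv:1403.0154 — 3 statements merged into one kernel-verified Lean document; each statement's English description precedes it below -/
import Mathlib

section
/- Let n be a positive real number, S_y a positive real number, and λ40, λ04, λ22 real numbers with λ04 > 1. Then the MSE of the ratio estimator, MSE(t₁) = (S_y⁴/n)·((λ40 − 1) + (λ04 − 1) − 2(λ22 − 1)), dominates the minimum variance of the difference estimator, minV(t₂) = (S_y⁴/n)·((λ40 − 1) − (λ22 − 1)²/(λ04 − 1)); more precisely, MSE(t₁) − minV(t₂) = (S_y⁴/(n(λ04 − 1)))·(λ04 − λ22)² ≥ 0, with equality if and only if λ22 = λ04. -/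
/-! The gap between the two first-order expressions is a completed square: with
`d = λ04 - 1` and `e = λ22 - 1`, one has `d - 2e + e²/d = (d - e)²/d`, and `d - e = λ04 - λ22`. -/

lemma add_sub_two_mul_sub_sub_sq_div {c d e : ℝ} (hd : d ≠ 0) :
    (c + d - 2 * e) - (c - e ^ 2 / d) = (d - e) ^ 2 / d := by
  field_simp
  ring

theorem stmt_3 (n Sy lam40 lam04 lam22 : ℝ)
    (hn : 0 < n) (hSy : 0 < Sy) (hlam : 1 < lam04) :
    (Sy ^ 4 / n) * ((lam40 - 1) + (lam04 - 1) - 2 * (lam22 - 1))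
      - (Sy ^ 4 / n) * ((lam40 - 1) - (lam22 - 1) ^ 2 / (lam04 - 1))
      = (Sy ^ 4 / (n * (lam04 - 1))) * (lam04 - lam22) ^ 2 ∧
    0 ≤ (Sy ^ 4 / (n * (lam04 - 1))) * (lam04 - lam22) ^ 2 ∧
    ((Sy ^ 4 / (n * (lam04 - 1))) * (lam04 - lam22) ^ 2 = 0 ↔ lam22 = lam04) := by
  have hd : 0 < lam04 - 1 := sub_pos.mpr hlam
  have hcoeff : 0 < Sy ^ 4 / (n * (lam04 - 1)) := by positivity
  refine ⟨?_, by positivity, ?_⟩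
  · rw [← mul_sub, add_sub_two_mul_sub_sub_sq_div hd.ne', sub_sub_sub_cancel_right]
    field_simp
  · rw [mul_eq_zero, or_iff_right hcoeff.ne', sq_eq_zero_iff, sub_eq_zero, eq_comm]
end

section
/- Let n be a positive real number, S_y a positive real number, and λ40, λ04, λ22 real numbers with λ04 > 1. Then the MSE of the exponential ratio estimator, MSE(t₃) = (S_y⁴/n)·((λ40 − 1) + (λ04 − 1)/4 − (λ22 − 1)), dominates the minimum variance of the difference estimator, minV(t₂) = (S_y⁴/n)·((λ40 − 1) − (λ22 − 1)²/(λ04 − 1)); more precisely, MSE(t₃) − minV(t₂) = (S_y⁴/(4n(λ04 − 1)))·((λ04 − 1) − 2(λ22 − 1))² ≥ 0, with equality if and only if λ04 − 1 = 2(λ22 − 1). -/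
/-! Completing the square: `c/4 - d + d²/c = (c - 2d)²/(4c)`, so the gap between the two
first-order expressions is a positive multiple of a square when `c = λ04 - 1 > 0`. -/

theorem mul_add_quarter_sub_sub_mul_sub_sq_div {K : Type*} [Field K] [CharZero K]
    (a x c d : K) (hc : c ≠ 0) :
    a * (x + c / 4 - d) - a * (x - d ^ 2 / c) = a / (4 * c) * (c - 2 * d) ^ 2 := by
  field_simp
  ring

theorem mul_sq_eq_zero_iff_of_ne_zero {M₀ : Type*} [MonoidWithZero M₀] [NoZeroDivisors M₀]
    {a b : M₀} (ha : a ≠ 0) : a * b ^ 2 = 0 ↔ b = 0 := by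
  rw [mul_eq_zero_iff_left ha, sq_eq_zero_iff]

theorem stmt_4 (n Sy lam40 lam04 lam22 : ℝ)
    (hn : 0 < n) (hSy : 0 < Sy) (hlam : 1 < lam04) :
    (Sy ^ 4 / n) * ((lam40 - 1) + (lam04 - 1) / 4 - (lam22 - 1))
      - (Sy ^ 4 / n) * ((lam40 - 1) - (lam22 - 1) ^ 2 / (lam04 - 1))
      = (Sy ^ 4 / (4 * n * (lam04 - 1))) * ((lam04 - 1) - 2 * (lam22 - 1)) ^ 2 ∧
    0 ≤ (Sy ^ 4 / (4 * n * (lam04 - 1))) * ((lam04 - 1) - 2 * (lam22 - 1)) ^ 2 ∧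
    ((Sy ^ 4 / (4 * n * (lam04 - 1))) * ((lam04 - 1) - 2 * (lam22 - 1)) ^ 2 = 0
      ↔ lam04 - 1 = 2 * (lam22 - 1)) := by
  have hc : 0 < lam04 - 1 := sub_pos.2 hlam
  have hcoeff : 0 < Sy ^ 4 / (4 * n * (lam04 - 1)) := by positivity
  refine ⟨?_, by positivity, ?_⟩
  · rw [mul_add_quarter_sub_sub_mul_sub_sq_div _ _ _ _ hc.ne', div_div, mul_left_comm n, ← mul_assoc]
  · rw [mul_sq_eq_zero_iff_of_ne_zero hcoeff.ne', sub_eq_zero]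
end

section
/- Let n be a positive real number, S_y, S_φ, A₁, b real numbers with S_y, S_φ > 0, and λ40, λ04, λ22 real numbers with λ04 > 1. Then the first-order MSE of the family t_s, namely M = (1/n)·(S_y⁴·(λ40 − 1) + (λ04 − 1)·(b²·S_φ⁴ + A₁²·S_y⁴ + 2·A₁·b·S_y²·S_φ²) − 2·S_y²·(λ22 − 1)·(b·S_φ² + A₁·S_y²)), satisfies M ≥ (S_y⁴/n)·((λ40 − 1) − (λ22 − 1)²/(λ04 − 1)); that is, every member of the family t_s (for any choice of b and A₁) has first-order MSE at least the minimum variance of the difference estimator t₂. -/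
/-!
The MSE is `S_y⁴(λ40 − 1)/n` plus `1/n` times a quadratic `a x² − 2 d x` in the single quantity
`x = b S_φ² + A₁ S_y²`, with leading coefficient `a = λ04 − 1 > 0` and `d = S_y²(λ22 − 1)`.
Completing the square bounds that quadratic below by `−d²/a`, which is exactly the variance of
the optimal difference estimator.
-/

lemma neg_sq_div_le_mul_sq_sub {K : Type*} [Field K] [LinearOrder K] [IsStrictOrderedRing K]
    {a : K} (ha : 0 < a) (d x : K) :
    -(d ^ 2 / a) ≤ a * x ^ 2 - 2 * d * x := by
  have hsq : a * x ^ 2 - 2 * d * x + d ^ 2 / a = a * (x - d / a) ^ 2 := by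
    field_simp
    ring
  nlinarith [mul_nonneg ha.le (sq_nonneg (x - d / a))]

theorem stmt_14_general (n Sy Sφ A₁ b lam40 lam04 lam22 : ℝ)
    (hn : 0 < n) (hlam : 1 < lam04) :
    (Sy ^ 4 / n) * ((lam40 - 1) - (lam22 - 1) ^ 2 / (lam04 - 1))
      ≤ (1 / n) * (Sy ^ 4 * (lam40 - 1)
        + (lam04 - 1) * (b ^ 2 * Sφ ^ 4 + A₁ ^ 2 * Sy ^ 4 + 2 * A₁ * b * Sy ^ 2 * Sφ ^ 2)
        - 2 * Sy ^ 2 * (lam22 - 1) * (b * Sφ ^ 2 + A₁ * Sy ^ 2)) := by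
  set d := Sy ^ 2 * (lam22 - 1)
  set x := b * Sφ ^ 2 + A₁ * Sy ^ 2
  have hquad := neg_sq_div_le_mul_sq_sub (sub_pos.2 hlam) d x
  calc (Sy ^ 4 / n) * ((lam40 - 1) - (lam22 - 1) ^ 2 / (lam04 - 1))
      = (1 / n) * (Sy ^ 4 * (lam40 - 1) + -(d ^ 2 / (lam04 - 1))) := by ring
    _ ≤ (1 / n) * (Sy ^ 4 * (lam40 - 1) + ((lam04 - 1) * x ^ 2 - 2 * d * x)) := by gcongr
    _ = _ := by ring

theorem stmt_14 (n Sy Sφ A₁ b lam40 lam04 lam22 : ℝ)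
    (hn : 0 < n) (hSy : 0 < Sy) (hSφ : 0 < Sφ) (hlam : 1 < lam04) :
    (Sy ^ 4 / n) * ((lam40 - 1) - (lam22 - 1) ^ 2 / (lam04 - 1))
      ≤ (1 / n) * (Sy ^ 4 * (lam40 - 1)
        + (lam04 - 1) * (b ^ 2 * Sφ ^ 4 + A₁ ^ 2 * Sy ^ 4 + 2 * A₁ * b * Sy ^ 2 * Sφ ^ 2)
        - 2 * Sy ^ 2 * (lam22 - 1) * (b * Sφ ^ 2 + A₁ * Sy ^ 2)) :=
  stmt_14_general n Sy Sφ A₁ b lam40 lam04 lam22 hn hlam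
end
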